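/- arXiv:2510.19349 — 7 statements merged into one kernel-verified Lean document; each statement's English description precedes it below -/
import Mathlib

section
/- Let L be an invertible d×d real matrix, let x ∈ ℝ^d, set x̄ = L⁻¹x, and let α ∈ ℝ satisfy 1 + α‖x̄‖² = √(1 + ‖x̄‖²), where ‖·‖ is the Euclidean norm. Then the matrix L' = L(I + α x̄ x̄ᵀ) satisfies L' L'ᵀ = L Lᵀ + x xᵀ; that is, L' is a symmetric (Cholesky-style) factor of the rank-one update of L Lᵀ. -/
/-!
With `W = x̄ x̄ᵀ` and `s = ‖x̄‖²` we have `W² = s W`, so `(I + α W)² = I + (2α + α² s) W`.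
Squaring the defining equation of `α` gives `s (2α + α² s) = s`, hence `(I + α W)² = I + W`
(if `s = 0` then `W = 0`). As `I + α W` is symmetric,
`L' L'ᵀ = L (I + α W)² Lᵀ = L Lᵀ + (L x̄)(L x̄)ᵀ = L Lᵀ + x xᵀ`.
-/

open Matrix

namespace Matrix

variable {l m n R : Type*}

theorem mul_vecMulVec_mul_transpose [Fintype m] [Fintype n] [CommSemiring R]
    (M : Matrix l m R) (N : Matrix l n R) (u : m → R) (w : n → R) :
    M * vecMulVec u w * Nᵀ = vecMulVec (M *ᵥ u) (N *ᵥ w) := by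
  rw [mul_vecMulVec, vecMulVec_mul, vecMul_transpose]

theorem vecMulVec_self_mul_self [Fintype n] [CommSemiring R] (v : n → R) :
    vecMulVec v v * vecMulVec v v = (v ⬝ᵥ v) • vecMulVec v v := by
  rw [vecMulVec_mul_vecMulVec, vecMulVec_smul]

theorem one_add_smul_vecMulVec_self_mul_self [Fintype n] [DecidableEq n]
    [CommRing R] [LinearOrder R] [IsStrictOrderedRing R] {v : n → R} {α : R}
    (hα : (1 + α * (v ⬝ᵥ v)) ^ 2 = 1 + v ⬝ᵥ v) :
    (1 + α • vecMulVec v v) * (1 + α • vecMulVec v v) = 1 + vecMulVec v v := by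
  set s := v ⬝ᵥ v
  set W := vecMulVec v v
  have hexpand : (1 + α • W) * (1 + α • W) = 1 + (2 * α + α ^ 2 * s) • W := by
    simp only [add_mul, mul_add, one_mul, mul_one, smul_mul_smul_comm, W,
      vecMulVec_self_mul_self, smul_smul]
    module
  have hcoeff : s * (2 * α + α ^ 2 * s - 1) = 0 := by linear_combination hα
  rcases mul_eq_zero.mp hcoeff with hs | hc
  · have hv : v = 0 := dotProduct_self_eq_zero.mp hs
    simp [W, hv]
  · rw [hexpand, sub_eq_zero.mp hc, one_smul]

end Matrix

/-- Rank-one symmetric (Cholesky-style) factor update: if `x̄ = L⁻¹ x` and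
`α` satisfies `1 + α‖x̄‖² = √(1 + ‖x̄‖²)`, then `L' = L (I + α x̄ x̄ᵀ)`
satisfies `L' L'ᵀ = L Lᵀ + x xᵀ`. -/
theorem rank_one_cholesky_factor_update
    (d : ℕ) (L : Matrix (Fin d) (Fin d) ℝ) (hL : IsUnit L.det)
    (x : Fin d → ℝ) (xbar : Fin d → ℝ) (hxbar : xbar = L⁻¹ *ᵥ x)
    (α : ℝ)
    (hα : 1 + α * (xbar ⬝ᵥ xbar) = Real.sqrt (1 + xbar ⬝ᵥ xbar)) :
    (L * (1 + α • vecMulVec xbar xbar)) * (L * (1 + α • vecMulVec xbar xbar))ᵀ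
      = L * Lᵀ + vecMulVec x x := by
  have hx : L *ᵥ xbar = x := by
    rw [hxbar, mulVec_mulVec, mul_nonsing_inv L hL, one_mulVec]
  have hnonneg : 0 ≤ xbar ⬝ᵥ xbar := Fintype.sum_nonneg fun i => mul_self_nonneg (xbar i)
  have hsq : (1 + α * (xbar ⬝ᵥ xbar)) ^ 2 = 1 + xbar ⬝ᵥ xbar := by
    rw [hα, Real.sq_sqrt (by positivity)]
  have hsymm : (1 + α • vecMulVec xbar xbar)ᵀ = 1 + α • vecMulVec xbar xbar := by simp
  calc (L * (1 + α • vecMulVec xbar xbar)) * (L * (1 + α • vecMulVec xbar xbar))ᵀ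
      = L * ((1 + α • vecMulVec xbar xbar) * (1 + α • vecMulVec xbar xbar)) * Lᵀ := by
        rw [transpose_mul, hsymm]; simp only [Matrix.mul_assoc]
    _ = L * Lᵀ + vecMulVec x x := by
        rw [one_add_smul_vecMulVec_self_mul_self hsq, mul_add, mul_one, add_mul,
          mul_vecMulVec_mul_transpose, hx]
end

section
/- (Rank-one update representation of the inverse factor.) Let ε > 0, let L₀ = ε^{-1/2} I ∈ ℝ^{d×d}, and let x₁, …, x_T ∈ ℝ^d be a sequence of context vectors. Define recursively, for t ≥ 0: x̄_{t+1} = L_t⁻¹ x_{t+1}; α_{t+1} ∈ ℝ is such that 1 + α_{t+1}‖x̄_{t+1}‖² = √(1 + ‖x̄_{t+1}‖²); β_{t+1} = α_{t+1}/(1 + α_{t+1}‖x̄_{t+1}‖²); L_{t+1} = L_t(I + α_{t+1} x̄_{t+1} x̄_{t+1}ᵀ); and with U₀, V₀ the empty d×0 matrices, U_{t+1} = [U_t | β_{t+1} x̄_{t+1}] and V_{t+1} = [V_t | (I − V_t U_tᵀ) x̄_{t+1}] (column-wise concatenation, so U_t, V_t ∈ ℝ^{d×t}). Then every L_t is invertible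 and for all t ≥ 0, L_t⁻¹ = (I − U_t V_tᵀ) L₀⁻¹. -/
open Matrix

private lemma vecMulVec_sq_aux {d : ℕ} (u : Fin d → ℝ) :
    vecMulVec u u * vecMulVec u u = (u ⬝ᵥ u) • vecMulVec u u := by
  ext i j
  simp only [Matrix.mul_apply, Matrix.vecMulVec_apply, Matrix.smul_apply, smul_eq_mul,
    dotProduct, Finset.sum_mul]
  exact Finset.sum_congr rfl fun k _ => by ring

private lemma vecMulVec_mulVec_aux {d : ℕ} (u v : Fin d → ℝ)
    (A : Matrix (Fin d) (Fin d) ℝ) :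
    vecMulVec u (A *ᵥ v) = vecMulVec u v * Aᵀ := by
  ext i j
  simp only [Matrix.vecMulVec_apply, Matrix.mul_apply, Matrix.mulVec, dotProduct,
    Matrix.transpose_apply, Finset.mul_sum]
  exact Finset.sum_congr rfl fun k _ => by ring

private lemma vecMulVec_smul_left_aux {d : ℕ} (b : ℝ) (u v : Fin d → ℝ) :
    vecMulVec (b • u) v = b • vecMulVec u v := by
  ext i j
  simp [Matrix.vecMulVec_apply, mul_assoc]

/-- Rank-one update representation of the inverse factor: with
`L₀ = ε^{-1/2} I`, `x̄_{t+1} = L_t⁻¹ x_{t+1}`,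
`1 + α_{t+1}‖x̄_{t+1}‖² = √(1 + ‖x̄_{t+1}‖²)`,
`β_{t+1} = α_{t+1}/(1 + α_{t+1}‖x̄_{t+1}‖²)`,
`L_{t+1} = L_t (I + α_{t+1} x̄_{t+1} x̄_{t+1}ᵀ)`,
`U_{t+1} = [U_t | β_{t+1} x̄_{t+1}]`, `V_{t+1} = [V_t | (I − V_t U_tᵀ) x̄_{t+1}]`,
every `L_t` is invertible and `L_t⁻¹ = (I − U_t V_tᵀ) L₀⁻¹`. -/
theorem rank_one_inverse_factor_representation
    (d T : ℕ) (ε : ℝ) (hε : 0 < ε)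
    (L : ℕ → Matrix (Fin d) (Fin d) ℝ)
    (x xbar : ℕ → Fin d → ℝ)
    (α β : ℕ → ℝ)
    (U V : (t : ℕ) → Matrix (Fin d) (Fin t) ℝ)
    (hL0 : L 0 = (ε ^ (-(1/2 : ℝ))) • 1)
    (hxbar : ∀ t, t < T → xbar (t+1) = (L t)⁻¹ *ᵥ x (t+1))
    (hα : ∀ t, t < T →
      1 + α (t+1) * (xbar (t+1) ⬝ᵥ xbar (t+1))
        = Real.sqrt (1 + xbar (t+1) ⬝ᵥ xbar (t+1)))
    (hβ : ∀ t, t < T →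
      β (t+1) = α (t+1) / (1 + α (t+1) * (xbar (t+1) ⬝ᵥ xbar (t+1))))
    (hL : ∀ t, t < T →
      L (t+1) = L t * (1 + α (t+1) • vecMulVec (xbar (t+1)) (xbar (t+1))))
    (hU : ∀ t, t < T → ∀ i,
      U (t+1) i = Fin.snoc (U t i) (β (t+1) * xbar (t+1) i))
    (hV : ∀ t, t < T → ∀ i,
      V (t+1) i = Fin.snoc (V t i) (((1 - V t * (U t)ᵀ) *ᵥ xbar (t+1)) i)) :
    ∀ t, t ≤ T → IsUnit (L t).det ∧ (L t)⁻¹ = (1 - U t * (V t)ᵀ) * (L 0)⁻¹ := by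
  intro t
  induction t with
  | zero =>
    intro _
    have hcpos : (0:ℝ) < ε ^ (-(1/2 : ℝ)) := Real.rpow_pos_of_pos hε _
    have hrinv : L 0 * ((ε ^ (-(1/2 : ℝ)))⁻¹ • (1 : Matrix (Fin d) (Fin d) ℝ)) = 1 := by
      rw [hL0, smul_mul_smul_comm, mul_inv_cancel₀ hcpos.ne', one_mul, one_smul]
    have hUV0 : U 0 * (V 0)ᵀ = 0 := by
      ext i j
      simp [Matrix.mul_apply]
    refine ⟨Matrix.isUnit_det_of_right_inverse hrinv, ?_⟩
    rw [hUV0, sub_zero, one_mul]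
  | succ t ih =>
    intro htT
    have ht : t < T := htT
    obtain ⟨hdet, hinv⟩ := ih (Nat.le_of_succ_le htT)
    have hα' := hα t ht
    have hβ' := hβ t ht
    have hL' := hL t ht
    have hU' := hU t ht
    have hV' := hV t ht
    set xb := xbar (t+1) with hxb
    set a := α (t+1) with ha
    set b := β (t+1) with hb
    set s := xb ⬝ᵥ xb with hs
    set E : Matrix (Fin d) (Fin d) ℝ := vecMulVec xb xb with hE
    have hsnn : 0 ≤ s := by
      simp only [hs, dotProduct]
      exact Finset.sum_nonneg fun i _ => mul_self_nonneg _
    have hpos : 0 < 1 + a * s := by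
      rw [hα']
      exact Real.sqrt_pos.2 (by linarith)
    have hEE : E * E = s • E := by rw [hE, hs]; exact vecMulVec_sq_aux xb
    have hbrel : b * (1 + a * s) = a := by
      rw [hβ', div_mul_cancel₀ _ hpos.ne']
    have hM : (1 + a • E) * (1 - b • E) = 1 := by
      rw [mul_sub, mul_one, add_mul, one_mul, Matrix.mul_smul, Matrix.smul_mul, hEE]
      simp only [smul_smul]
      have hcoef : a = b + b * (a * s) := by nlinarith [hbrel]
      rw [add_sub_assoc]
      have hz : a • E - (b • E + (b * (a * s)) • E) = 0 := by
        rw [← add_smul, ← sub_smul, ← hcoef]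
        simp
      rw [hz, add_zero]
    have hLL : L t * (L t)⁻¹ = 1 := Matrix.mul_nonsing_inv _ hdet
    have hrinv : L (t+1) * ((1 - b • E) * (L t)⁻¹) = 1 := by
      rw [hL', Matrix.mul_assoc, ← Matrix.mul_assoc (1 + a • E), hM, Matrix.one_mul, hLL]
    refine ⟨Matrix.isUnit_det_of_right_inverse hrinv, ?_⟩
    rw [Matrix.inv_eq_right_inv hrinv, hinv]
    have hUV : U (t+1) * (V (t+1))ᵀ
        = U t * (V t)ᵀ + vecMulVec (b • xb) ((1 - V t * (U t)ᵀ) *ᵥ xb) := by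
      ext i j
      simp only [Matrix.mul_apply, Matrix.add_apply, Matrix.transpose_apply,
        Matrix.vecMulVec_apply, Pi.smul_apply, smul_eq_mul]
      rw [Fin.sum_univ_castSucc]
      congr 1
      · exact Finset.sum_congr rfl fun k _ => by
          rw [hU' i, hV' j]; simp [Fin.snoc_castSucc]
      · rw [hU' i, hV' j]; simp [Fin.snoc_last]
    have hT : (1 - V t * (U t)ᵀ)ᵀ = 1 - U t * (V t)ᵀ := by
      rw [Matrix.transpose_sub, Matrix.transpose_one, Matrix.transpose_mul,
        Matrix.transpose_transpose]
    have hvmv : vecMulVec (b • xb) ((1 - V t * (U t)ᵀ) *ᵥ xb)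
        = b • (E * (1 - U t * (V t)ᵀ)) := by
      rw [vecMulVec_smul_left_aux, vecMulVec_mulVec_aux, hT, hE]
    have key : 1 - U (t+1) * (V (t+1))ᵀ = (1 - b • E) * (1 - U t * (V t)ᵀ) := by
      rw [hUV, hvmv, sub_mul, one_mul, Matrix.smul_mul]
      abel
    rw [key, Matrix.mul_assoc]
end

section
/- (Fast symmetric factorization of a rank-B update.) Let X̄ ∈ ℝ^{d×B} and suppose X̄ = Q R where Q ∈ ℝ^{d×B} has orthonormal columns (QᵀQ = I_B) and R ∈ ℝ^{B×B}. Let M ∈ ℝ^{B×B} satisfy I_B + R Rᵀ = M Mᵀ, and set Y = M − I_B. Then I_d + X̄ X̄ᵀ = (I_d + Q Y Qᵀ)(I_d + Q Y Qᵀ)ᵀ. -/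
open Matrix

/-- Fast symmetric factorization of a rank-`B` update: if `X̄ = Q R` with
`QᵀQ = I`, `I + R Rᵀ = M Mᵀ` and `Y = M − I`, then
`I + X̄ X̄ᵀ = (I + Q Y Qᵀ)(I + Q Y Qᵀ)ᵀ`. -/
theorem fast_symmetric_factorization
    (d B : ℕ) (Xbar Q : Matrix (Fin d) (Fin B) ℝ)
    (R M Y : Matrix (Fin B) (Fin B) ℝ)
    (hQR : Xbar = Q * R)
    (hQ : Qᵀ * Q = 1)
    (hM : 1 + R * Rᵀ = M * Mᵀ)
    (hY : Y = M - 1) :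
    1 + Xbar * Xbarᵀ = (1 + Q * Y * Qᵀ) * (1 + Q * Y * Qᵀ)ᵀ := by
  have key : (M - 1) + (M - 1)ᵀ + (M - 1) * (M - 1)ᵀ = R * Rᵀ := by
    have h : M * Mᵀ = 1 + R * Rᵀ := hM.symm
    simp only [transpose_sub, transpose_one]
    noncomm_ring
    rw [h]
    abel
  subst hQR hY
  simp only [transpose_add, transpose_mul, transpose_one, transpose_transpose]
  generalize hT : (M - 1)ᵀ = T at key ⊢
  generalize hN : M - 1 = N at key ⊢
  have expand : (1 + Q * N * Qᵀ) * (1 + Q * (T * Qᵀ))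
      = 1 + Q * (N + T + N * ((Qᵀ * Q) * T)) * Qᵀ := by
    simp only [Matrix.mul_add, Matrix.add_mul, Matrix.one_mul, Matrix.mul_one, Matrix.mul_assoc]
    abel
  rw [expand, hQ, Matrix.one_mul, key]
  simp only [Matrix.mul_assoc]
end

section
/- Let L ∈ ℝ^{d×d} be invertible and X ∈ ℝ^{d×B}. Set X̄ = L⁻¹X and suppose X̄ = Q R with Q ∈ ℝ^{d×B} satisfying QᵀQ = I_B and R ∈ ℝ^{B×B}; let M ∈ ℝ^{B×B} satisfy I_B + R Rᵀ = M Mᵀ and set Y = M − I_B. Then L' = L(I_d + Q Y Qᵀ) satisfies L' L'ᵀ = L Lᵀ + X Xᵀ; that is, L' is a symmetric (Cholesky-style) factor of the rank-B update of L Lᵀ. -/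
open Matrix

/-- Cholesky-style factor of a rank-`B` update: with `X̄ = L⁻¹X = Q R`,
`QᵀQ = I`, `I + R Rᵀ = M Mᵀ`, `Y = M − I`, the matrix
`L' = L (I + Q Y Qᵀ)` satisfies `L' L'ᵀ = L Lᵀ + X Xᵀ`. -/
theorem batch_cholesky_factor_update
    (d B : ℕ) (L : Matrix (Fin d) (Fin d) ℝ) (hL : IsUnit L.det)
    (X Xbar Q : Matrix (Fin d) (Fin B) ℝ)
    (R M Y : Matrix (Fin B) (Fin B) ℝ)
    (hXbar : Xbar = L⁻¹ * X)
    (hQR : Xbar = Q * R)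
    (hQ : Qᵀ * Q = 1)
    (hM : 1 + R * Rᵀ = M * Mᵀ)
    (hY : Y = M - 1) :
    (L * (1 + Q * Y * Qᵀ)) * (L * (1 + Q * Y * Qᵀ))ᵀ = L * Lᵀ + X * Xᵀ := by
  have hX : X = L * Xbar := by
    rw [hXbar, ← Matrix.mul_assoc, Matrix.mul_nonsing_inv L hL, Matrix.one_mul]
  have hRR : R * Rᵀ = Y + Yᵀ + Y * Yᵀ := by
    have h1 : M * Mᵀ - 1 = (M - 1) + (M - 1)ᵀ + (M - 1) * (M - 1)ᵀ := by
      simp only [transpose_sub, transpose_one, sub_mul, mul_sub, mul_one, one_mul]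
      abel
    rw [← hM] at h1
    rw [hY]
    simpa using h1
  have collapse : (Q * Y * Qᵀ) * (Q * Yᵀ * Qᵀ) = Q * (Y * Yᵀ) * Qᵀ := by
    calc (Q * Y * Qᵀ) * (Q * Yᵀ * Qᵀ) = Q * (Y * ((Qᵀ * Q) * (Yᵀ * Qᵀ))) := by
          simp only [Matrix.mul_assoc]
      _ = Q * (Y * Yᵀ) * Qᵀ := by rw [hQ, Matrix.one_mul]; simp only [Matrix.mul_assoc]
  have hmid : (1 + Q * Y * Qᵀ) * (1 + Q * Y * Qᵀ)ᵀ = 1 + Q * (R * Rᵀ) * Qᵀ := by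
    rw [transpose_add, transpose_one, transpose_mul, transpose_mul, transpose_transpose,
      ← Matrix.mul_assoc]
    rw [Matrix.add_mul, Matrix.mul_add, Matrix.mul_add, Matrix.one_mul, Matrix.mul_one,
      collapse, hRR]
    simp only [Matrix.mul_add, Matrix.add_mul, Matrix.one_mul]
    abel
  calc (L * (1 + Q * Y * Qᵀ)) * (L * (1 + Q * Y * Qᵀ))ᵀ
      = L * ((1 + Q * Y * Qᵀ) * (1 + Q * Y * Qᵀ)ᵀ) * Lᵀ := by
        rw [transpose_mul]; simp only [Matrix.mul_assoc]
    _ = L * (1 + Q * (R * Rᵀ) * Qᵀ) * Lᵀ := by rw [hmid]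
    _ = L * Lᵀ + (L * (Q * R)) * (L * (Q * R))ᵀ := by
        rw [transpose_mul, transpose_mul]
        simp only [Matrix.mul_add, Matrix.add_mul, Matrix.mul_one, Matrix.one_mul,
          Matrix.mul_assoc]
    _ = L * Lᵀ + X * Xᵀ := by rw [← hQR, ← hX]
end

section
/- Let U, V ∈ ℝ^{d×k}, Q ∈ ℝ^{d×B}, and C ∈ ℝ^{B×B}. Set U' = [U | Q C] and V' = [V | (I − V Uᵀ) Q] (column-wise concatenation, so U', V' ∈ ℝ^{d×(k+B)}). Then (I − Q C Qᵀ)(I − U Vᵀ) = I − U' V'ᵀ. -/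
open Matrix

/-- Appending the blocks `Q C` to `U` and `(I − V Uᵀ) Q` to `V` realizes the
product `(I − Q C Qᵀ)(I − U Vᵀ)` as `I − U' V'ᵀ`. -/
theorem batch_concat_product
    (d k B : ℕ) (U V : Matrix (Fin d) (Fin k) ℝ)
    (Q : Matrix (Fin d) (Fin B) ℝ) (C : Matrix (Fin B) (Fin B) ℝ)
    (U' V' : Matrix (Fin d) (Fin (k + B)) ℝ)
    (hU' : ∀ i, U' i = Fin.append (U i) (fun j => (Q * C) i j))
    (hV' : ∀ i, V' i = Fin.append (V i) (fun j => (((1 - V * Uᵀ) * Q : Matrix (Fin d) (Fin B) ℝ)) i j)) :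
    (1 - Q * C * Qᵀ) * (1 - U * Vᵀ) = 1 - U' * V'ᵀ := by
  have key : U' * V'ᵀ = U * Vᵀ + (Q * C) * ((1 - V * Uᵀ) * Q)ᵀ := by
    ext i j
    simp only [Matrix.mul_apply, Matrix.add_apply, Matrix.transpose_apply, hU', hV']
    rw [Fin.sum_univ_add]
    simp [Fin.append_left, Fin.append_right]
  rw [key]
  have : ((1 - V * Uᵀ) * Q)ᵀ = Qᵀ * (1 - U * Vᵀ) := by
    rw [Matrix.transpose_mul]
    congr 1
    simp [Matrix.transpose_sub, Matrix.transpose_mul]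
  rw [this]
  simp only [Matrix.mul_sub, Matrix.sub_mul, Matrix.mul_one, Matrix.one_mul, Matrix.mul_assoc]
  abel
end

section
/- Let U, V ∈ ℝ^{d×k}, Q ∈ ℝ^{d×B}, and C ∈ ℝ^{B×B}, and set U' = [U | Q C], V' = [V | (I − V Uᵀ) Q]. Then the low-rank product satisfies the additive increment formula U' V'ᵀ = U Vᵀ + Q C Qᵀ (I − U Vᵀ). -/
open Matrix

theorem Matrix.mul_transpose_eq_add_of_rows_eq_append {m R : Type*} [Fintype m]
    [CommSemiring R] {k b : ℕ} {U V : Matrix m (Fin k) R} {X Y : Matrix m (Fin b) R}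
    {U' V' : Matrix m (Fin (k + b)) R}
    (hU' : ∀ i, U' i = Fin.append (U i) (X i)) (hV' : ∀ i, V' i = Fin.append (V i) (Y i)) :
    U' * V'ᵀ = U * Vᵀ + X * Yᵀ := by
  ext i j
  simp only [mul_apply, transpose_apply, add_apply, hU', hV', Fin.sum_univ_add,
    Fin.append_left, Fin.append_right]

/-- Additive increment formula for the batch column concatenation:
`U' V'ᵀ = U Vᵀ + Q C Qᵀ (I − U Vᵀ)`. -/
theorem batch_concat_increment
    (d k B : ℕ) (U V : Matrix (Fin d) (Fin k) ℝ)
    (Q : Matrix (Fin d) (Fin B) ℝ) (C : Matrix (Fin B) (Fin B) ℝ)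
    (U' V' : Matrix (Fin d) (Fin (k + B)) ℝ)
    (hU' : ∀ i, U' i = Fin.append (U i) (fun j => (Q * C) i j))
    (hV' : ∀ i, V' i = Fin.append (V i) (fun j => (((1 - V * Uᵀ) * Q : Matrix (Fin d) (Fin B) ℝ)) i j)) :
    U' * V'ᵀ = U * Vᵀ + Q * C * Qᵀ * (1 - U * Vᵀ) := by
  rw [mul_transpose_eq_add_of_rows_eq_append hU' hV', transpose_mul, transpose_sub,
    transpose_one, transpose_mul, transpose_transpose, Matrix.mul_assoc (Q * C)]
end

section
/- (Batch update representation of the inverse factor.) Let ε > 0, let L₀ = ε^{-1/2} I ∈ ℝ^{d×d}, and let X₁, …, X_n be a sequence of batch matrices with X_{t+1} ∈ ℝ^{d×B_{t+1}}. Define recursively, for t ≥ 0: X̄_{t+1} = L_t⁻¹ X_{t+1}; suppose X̄_{t+1} = Q_{t+1} R_{t+1} with Q_{t+1} ∈ ℝ^{d×B_{t+1}} satisfying Q_{t+1}ᵀQ_{t+1} = I and R_{t+1} ∈ ℝ^{B_{t+1}×B_{t+1}}; let M_{t+1} satisfy I + R_{t+1}R_{t+1}ᵀ = M_{t+1}M_{t+1}ᵀ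 and set Y_{t+1} = M_{t+1} − I, assumed invertible with Y_{t+1}⁻¹ + I invertible; L_{t+1} = L_t(I + Q_{t+1} Y_{t+1} Q_{t+1}ᵀ); and with U₀, V₀ the empty d×0 matrices, U_{t+1} = [U_t | Q_{t+1}(Y_{t+1}⁻¹ + I)⁻¹] and V_{t+1} = [V_t | (I − V_t U_tᵀ) Q_{t+1}] (column-wise concatenation). Then every L_t is invertible and for all t ≥ 0, L_t⁻¹ = (I − U_t V_tᵀ) L₀⁻¹. -/
open Matrix

/-- Total number of columns accumulated after `t` batch updates of sizes
`B 1, …, B t`. -/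
def accCols (B : ℕ → ℕ) : ℕ → ℕ :=
  fun t => Nat.rec 0 (fun n acc => acc + B (n + 1)) t

private lemma mul_transpose_append {p m k : ℕ}
    (A B : Matrix (Fin p) (Fin m) ℝ) (C D : Matrix (Fin p) (Fin k) ℝ)
    (A' B' : Matrix (Fin p) (Fin (m + k)) ℝ)
    (hA : ∀ i, A' i = Fin.append (A i) (C i))
    (hB : ∀ i, B' i = Fin.append (B i) (D i)) :
    A' * B'ᵀ = A * Bᵀ + C * Dᵀ := by
  ext i j
  simp only [Matrix.mul_apply, Matrix.transpose_apply, Matrix.add_apply, hA, hB]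
  rw [Fin.sum_univ_add]
  simp

/-- Batch update representation of the inverse factor: with `L₀ = ε^{-1/2} I`,
`X̄_{t+1} = L_t⁻¹ X_{t+1} = Q_{t+1} R_{t+1}` (`Q_{t+1}ᵀQ_{t+1} = I`),
`I + R_{t+1}R_{t+1}ᵀ = M_{t+1}M_{t+1}ᵀ`, `Y_{t+1} = M_{t+1} − I` (with
`Y_{t+1}` and `Y_{t+1}⁻¹ + I` invertible),
`L_{t+1} = L_t (I + Q_{t+1} Y_{t+1} Q_{t+1}ᵀ)`,
`U_{t+1} = [U_t | Q_{t+1}(Y_{t+1}⁻¹ + I)⁻¹]`,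
`V_{t+1} = [V_t | (I − V_t U_tᵀ) Q_{t+1}]`, every `L_t` is invertible and
`L_t⁻¹ = (I − U_t V_tᵀ) L₀⁻¹`. -/
theorem batch_inverse_factor_representation
    (d n : ℕ) (ε : ℝ) (hε : 0 < ε)
    (B : ℕ → ℕ)
    (L : ℕ → Matrix (Fin d) (Fin d) ℝ)
    (X Q : (t : ℕ) → Matrix (Fin d) (Fin (B t)) ℝ)
    (R M Y : (t : ℕ) → Matrix (Fin (B t)) (Fin (B t)) ℝ)
    (U V : (t : ℕ) → Matrix (Fin d) (Fin (accCols B t)) ℝ)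
    (hL0 : L 0 = (ε ^ (-(1/2 : ℝ))) • 1)
    (hXbar : ∀ t, t < n → (L t)⁻¹ * X (t+1) = Q (t+1) * R (t+1))
    (hQ : ∀ t, t < n → (Q (t+1))ᵀ * Q (t+1) = 1)
    (hM : ∀ t, t < n → 1 + R (t+1) * (R (t+1))ᵀ = M (t+1) * (M (t+1))ᵀ)
    (hY : ∀ t, t < n → Y (t+1) = M (t+1) - 1)
    (hYinv : ∀ t, t < n → IsUnit (Y (t+1)).det)
    (hYIinv : ∀ t, t < n → IsUnit ((Y (t+1))⁻¹ + 1).det)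
    (hL : ∀ t, t < n → L (t+1) = L t * (1 + Q (t+1) * Y (t+1) * (Q (t+1))ᵀ))
    (hU : ∀ t, t < n → ∀ i,
      U (t+1) i = Fin.append (U t i)
        (fun j => (Q (t+1) * ((Y (t+1))⁻¹ + 1)⁻¹) i j))
    (hV : ∀ t, t < n → ∀ i,
      V (t+1) i = Fin.append (V t i)
        (fun j => (((1 - V t * (U t)ᵀ) * Q (t+1) :
            Matrix (Fin d) (Fin (B (t+1))) ℝ)) i j)) :
    ∀ t, t ≤ n → IsUnit (L t).det ∧ (L t)⁻¹ = (1 - U t * (V t)ᵀ) * (L 0)⁻¹ := by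
  intro t
  induction t with
  | zero =>
    intro _
    constructor
    · rw [hL0, Matrix.det_smul, Matrix.det_one, mul_one]
      exact (isUnit_iff_ne_zero.2 (ne_of_gt (Real.rpow_pos_of_pos hε _))).pow _
    · haveI : IsEmpty (Fin (accCols B 0)) := by
        rw [show accCols B 0 = 0 from rfl]; infer_instance
      have h0 : U 0 * (V 0)ᵀ = 0 := by
        ext i j
        simp [Matrix.mul_apply, Finset.univ_eq_empty]
      rw [h0, sub_zero, one_mul]
  | succ t ih =>
    intro hst
    have htn : t < n := hst
    obtain ⟨hLdet, hLinv⟩ := ih (le_of_lt htn)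
    set Qt := Q (t+1)
    set Yt := Y (t+1)
    set Z : Matrix (Fin (B (t+1))) (Fin (B (t+1))) ℝ := (Yt⁻¹ + 1)⁻¹ with hZ
    have hQQ : Qtᵀ * Qt = 1 := hQ t htn
    have hYl : Yt * Yt⁻¹ = 1 := Matrix.mul_nonsing_inv _ (hYinv t htn)
    have hYr : Yt⁻¹ * Yt = 1 := Matrix.nonsing_inv_mul _ (hYinv t htn)
    have hWl : (Yt⁻¹ + 1) * Z = 1 := Matrix.mul_nonsing_inv _ (hYIinv t htn)
    have hWr : Z * (Yt⁻¹ + 1) = 1 := Matrix.nonsing_inv_mul _ (hYIinv t htn)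
    have h1 : Yt * (Yt⁻¹ + 1) = 1 + Yt := by rw [mul_add, hYl, mul_one]
    have h2 : (Yt⁻¹ + 1) * Yt = 1 + Yt := by rw [add_mul, hYr, one_mul]
    have hZY : Z + Yt * Z = Yt := by
      calc Z + Yt * Z = (1 + Yt) * Z := by rw [add_mul, one_mul]
        _ = Yt := by rw [← h1, Matrix.mul_assoc, hWl, mul_one]
    have hYZ : Z + Z * Yt = Yt := by
      calc Z + Z * Yt = Z * (1 + Yt) := by rw [mul_add, mul_one]
        _ = Yt := by rw [← h2, ← Matrix.mul_assoc, hWr, one_mul]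
    set A : Matrix (Fin d) (Fin d) ℝ := 1 + Qt * Yt * Qtᵀ with hA
    have habsorb : ∀ W W' : Matrix (Fin (B (t+1))) (Fin (B (t+1))) ℝ,
        (Qt * W * Qtᵀ) * (Qt * W' * Qtᵀ) = Qt * (W * W') * Qtᵀ := by
      intro W W'
      calc (Qt * W * Qtᵀ) * (Qt * W' * Qtᵀ)
          = Qt * (W * ((Qtᵀ * Qt) * (W' * Qtᵀ))) := by
            simp only [Matrix.mul_assoc]
        _ = Qt * (W * W') * Qtᵀ := by
            rw [hQQ, Matrix.one_mul]; simp only [Matrix.mul_assoc]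
    have hsum1 : Qt * Z * Qtᵀ + Qt * (Yt * Z) * Qtᵀ = Qt * Yt * Qtᵀ := by
      rw [← Matrix.add_mul, ← Matrix.mul_add, hZY]
    have hsum2 : Qt * Z * Qtᵀ + Qt * (Z * Yt) * Qtᵀ = Qt * Yt * Qtᵀ := by
      rw [← Matrix.add_mul, ← Matrix.mul_add, hYZ]
    have e1 : A * (1 - Qt * Z * Qtᵀ) = 1 := by
      calc A * (1 - Qt * Z * Qtᵀ)
          = A - (Qt * Z * Qtᵀ + Qt * (Yt * Z) * Qtᵀ) := by
            rw [Matrix.mul_sub, Matrix.mul_one, hA, Matrix.add_mul,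
              Matrix.one_mul, habsorb]
        _ = 1 := by rw [hsum1, hA, add_sub_cancel_right]
    have e2 : (1 - Qt * Z * Qtᵀ) * A = 1 := by
      calc (1 - Qt * Z * Qtᵀ) * A
          = A - (Qt * Z * Qtᵀ + Qt * (Z * Yt) * Qtᵀ) := by
            rw [Matrix.sub_mul, Matrix.one_mul, hA, Matrix.mul_add,
              Matrix.mul_one, habsorb]
        _ = 1 := by rw [hsum2, hA, add_sub_cancel_right]
    have hAdet : IsUnit A.det := Matrix.isUnit_det_of_right_inverse e1
    have hAinv : A⁻¹ = 1 - Qt * Z * Qtᵀ := Matrix.inv_eq_right_inv e1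
    have hLt1 : L (t+1) = L t * A := hL t htn
    constructor
    · rw [hLt1, Matrix.det_mul]
      exact hLdet.mul hAdet
    · have hUV : U (t+1) * (V (t+1))ᵀ
          = U t * (V t)ᵀ + (Qt * Z) * ((1 - V t * (U t)ᵀ) * Qt)ᵀ :=
        mul_transpose_append (U t) (V t) (Qt * Z) ((1 - V t * (U t)ᵀ) * Qt)
          (U (t+1)) (V (t+1)) (hU t htn) (hV t htn)
      rw [hLt1, Matrix.mul_inv_rev, hAinv, hLinv, ← Matrix.mul_assoc]
      congr 1
      have h : ((1 - V t * (U t)ᵀ) * Qt)ᵀ = Qtᵀ * (1 - U t * (V t)ᵀ) := by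
        rw [Matrix.transpose_mul, Matrix.transpose_sub, Matrix.transpose_one,
          Matrix.transpose_mul, Matrix.transpose_transpose]
      rw [hUV, h, ← Matrix.mul_assoc (Qt * Z) Qtᵀ (1 - U t * (V t)ᵀ),
        Matrix.sub_mul, Matrix.one_mul, sub_add_eq_sub_sub]
end
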